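/- arXiv:2110.11805 — 3 statements merged into one kernel-verified Lean document; each statement's English description precedes it below -/
import Mathlib

section
/- Define g(t) = βᵀΘᵀa_t/(d√N), G₀(z) = βᵀΘᵀR(z)a₀/(d√N), and K(z) = βᵀΘᵀR(z)ZᵀY/(dN). Then for all t ≥ 0, g(t) = 𝓡_z{ e^{−t(z+δ)} G₀(z) + ((1 − e^{−t(z+δ)})/(z + δ)) K(z) }. -/
open Matrix Metric

-- AUX 1: circle integral of a finite sum
lemma circleIntegral_finset_sum {ι : Type*} (s : Finset ι) (f : ι → ℂ → ℂ) (c : ℂ) (R : ℝ)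
    (h : ∀ i ∈ s, CircleIntegrable (f i) c R) :
    (∮ z in C(c, R), ∑ i ∈ s, f i z) = ∑ i ∈ s, ∮ z in C(c, R), f i z := by
  simp only [circleIntegral, Finset.smul_sum]
  rw [intervalIntegral.integral_finset_sum]
  intro i hi
  exact ((circleIntegrable_iff R).mp (h i hi))

-- AUX 2: scalar linear ODE
lemma ode_scalar (κ b : ℝ) (hκ : κ ≠ 0) (α : ℝ → ℝ)
    (hα : ∀ t, HasDerivAt α (-κ * α t + b) t) (t : ℝ) :
    α t = Real.exp (-κ * t) * α 0 + (1 - Real.exp (-κ * t)) / κ * b := by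
  set φ : ℝ → ℝ := fun s => Real.exp (κ * s) * (α s - b / κ) with hφ
  have hφd : ∀ s, HasDerivAt φ 0 s := by
    intro s
    have h1 : HasDerivAt (fun u : ℝ => Real.exp (κ * u)) (κ * Real.exp (κ * s)) s := by
      simpa [mul_comm, Function.comp_def] using (Real.hasDerivAt_exp (κ * s)).comp s
        ((hasDerivAt_id s).const_mul κ)
    have h2 : HasDerivAt (fun u => α u - b / κ) (-κ * α s + b) s := (hα s).sub_const _
    have := h1.mul h2
    exact this.congr_deriv (by field_simp; ring)
  have hconst : ∀ s : ℝ, φ s = φ 0 := by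
    intro s
    have : ∀ x y : ℝ, φ x = φ y :=
      is_const_of_deriv_eq_zero (fun x => (hφd x).differentiableAt) (fun x => (hφd x).deriv)
    exact this s 0
  have h0 : φ t = α 0 - b / κ := by simpa [hφ] using hconst t
  have hexp : Real.exp (κ * t) ≠ 0 := Real.exp_ne_zero _
  rw [hφ] at h0
  simp only at h0
  rw [neg_mul, Real.exp_neg]
  field_simp at h0 ⊢
  linear_combination h0

-- AUX 3: cast lemmas
lemma mulVec_map_ofReal {m k : ℕ} (A : Matrix (Fin m) (Fin k) ℝ) (v : Fin k → ℝ) :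
    (A.map Complex.ofReal).mulVec (fun i => (v i : ℂ)) = fun j => ((A.mulVec v) j : ℂ) := by
  funext j
  simp [Matrix.mulVec, dotProduct, Matrix.map_apply]

lemma vecMul_map_ofReal {m k : ℕ} (A : Matrix (Fin m) (Fin k) ℝ) (v : Fin m → ℝ) :
    Matrix.vecMul (fun i => (v i : ℂ)) (A.map Complex.ofReal) = fun j => ((Matrix.vecMul v A) j : ℂ) := by
  funext j
  simp [Matrix.vecMul, dotProduct, Matrix.map_apply]

lemma map_mul_ofReal {m k l : ℕ} (A : Matrix (Fin m) (Fin k) ℝ) (B : Matrix (Fin k) (Fin l) ℝ) :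
    (A * B).map Complex.ofReal = A.map Complex.ofReal * B.map Complex.ofReal := by
  ext i j
  simp [Matrix.mul_apply, Matrix.map_apply]

lemma map_one_ofReal {k : ℕ} :
    (1 : Matrix (Fin k) (Fin k) ℝ).map Complex.ofReal = 1 :=
  Matrix.map_one Complex.ofReal Complex.ofReal_zero Complex.ofReal_one

-- AUX 4: spectrum membership from eigenvector
lemma mem_spectrum_of_eigen {k : ℕ} (A : Matrix (Fin k) (Fin k) ℂ) (μ : ℂ) (v : Fin k → ℂ)
    (hv : v ≠ 0) (hAv : A.mulVec v = μ • v) : μ ∈ spectrum ℂ A := by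
  rw [spectrum.mem_iff]
  intro hunit
  obtain ⟨u, hu⟩ := hunit
  apply hv
  have h0 : (algebraMap ℂ (Matrix (Fin k) (Fin k) ℂ) μ - A).mulVec v = 0 := by
    rw [Algebra.algebraMap_eq_smul_one, Matrix.sub_mulVec, Matrix.smul_mulVec,
      Matrix.one_mulVec, hAv, sub_self]
  have : ((↑u⁻¹ : Matrix (Fin k) (Fin k) ℂ) * (algebraMap ℂ (Matrix (Fin k) (Fin k) ℂ) μ - A)).mulVec v = v := by
    rw [← hu, Units.inv_mul, Matrix.one_mulVec]
  rw [← Matrix.mulVec_mulVec, h0, Matrix.mulVec_zero] at this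
  exact this.symm

/-- Cauchy integral representation of `g(t) = βᵀΘᵀa_t/(d√N)`:
`g(t) = 𝓡_z{ e^{-t(z+δ)} G₀(z) + ((1 - e^{-t(z+δ)})/(z+δ)) K(z) }` for all `t ≥ 0`. -/
theorem stmt9 (n N d : ℕ) (hn : 0 < n) (hN : 0 < N) (hd : 0 < d)
    (Z : Matrix (Fin n) (Fin N) ℝ) (Θ : Matrix (Fin N) (Fin d) ℝ)
    (β : Fin d → ℝ) (Y : Fin n → ℝ) (a₀ : Fin N → ℝ) (δ : ℝ) (hδ : 0 < δ)
    (a : ℝ → Fin N → ℝ) (ha0 : a 0 = a₀)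
    (hODE : ∀ t : ℝ, HasDerivAt a
      (-((((N : ℝ)⁻¹ • (Zᵀ * Z)) + δ • (1 : Matrix (Fin N) (Fin N) ℝ)).mulVec (a t))
        + (Real.sqrt N)⁻¹ • Zᵀ.mulVec Y) t)
    (c : ℂ) (R : ℝ) (hR : 0 < R)
    (hspec : spectrum ℂ (((N : ℝ)⁻¹ • (Zᵀ * Z)).map Complex.ofReal) ⊆ Metric.ball c R)
    (hδΓ : ((-δ : ℝ) : ℂ) ∉ Metric.closedBall c R)
    (Res : ℂ → Matrix (Fin N) (Fin N) ℂ)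
    (hRes : ∀ z : ℂ, Res z = (((N : ℝ)⁻¹ • (Zᵀ * Z)).map Complex.ofReal
      - z • (1 : Matrix (Fin N) (Fin N) ℂ))⁻¹)
    (g : ℝ → ℝ)
    (hg : ∀ t : ℝ, g t = (β ⬝ᵥ Θᵀ.mulVec (a t)) / ((d : ℝ) * Real.sqrt N))
    (G₀ : ℂ → ℂ)
    (hG₀ : ∀ z : ℂ, G₀ z = ((fun i => (β i : ℂ)) ⬝ᵥ
      ((Θᵀ.map Complex.ofReal) * Res z).mulVec (fun i => (a₀ i : ℂ)))
        / ((d : ℂ) * (Real.sqrt N : ℂ)))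
    (K : ℂ → ℂ)
    (hK : ∀ z : ℂ, K z = ((fun i => (β i : ℂ)) ⬝ᵥ
      ((Θᵀ.map Complex.ofReal) * Res z * (Zᵀ.map Complex.ofReal)).mulVec
        (fun i => (Y i : ℂ))) / ((d : ℂ) * (N : ℂ))) :
    ∀ t : ℝ, 0 ≤ t →
      ((g t : ℝ) : ℂ) =
        -(1 / (2 * Real.pi * Complex.I)) *
          (∮ z in C(c, R),
            (Complex.exp (-(t : ℂ) * (z + (δ : ℂ))) * G₀ z
              + ((1 - Complex.exp (-(t : ℂ) * (z + (δ : ℂ)))) / (z + (δ : ℂ))) * K z)) := by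
  intro t ht
  set M : Matrix (Fin N) (Fin N) ℝ := (N : ℝ)⁻¹ • (Zᵀ * Z) with hMdef
  -- spectral decomposition
  have hM : M.IsHermitian := by
    have h1 : (Zᵀ * Z).IsHermitian := by
      simpa [Matrix.conjTranspose_eq_transpose_of_trivial] using
        Matrix.isHermitian_conjTranspose_mul_self Z
    unfold Matrix.IsHermitian at h1 ⊢
    rw [hMdef, Matrix.conjTranspose_smul, h1]
    simp
  obtain ⟨U, μ, hUV, hVU, hspecM⟩ :
      ∃ (U : Matrix (Fin N) (Fin N) ℝ) (μ : Fin N → ℝ),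
        U * star U = 1 ∧ star U * U = 1 ∧ M = U * Matrix.diagonal μ * star U := by
    refine ⟨(hM.eigenvectorUnitary : Matrix (Fin N) (Fin N) ℝ), hM.eigenvalues,
      Matrix.mem_unitaryGroup_iff.mp hM.eigenvectorUnitary.2,
      Matrix.mem_unitaryGroup_iff'.mp hM.eigenvectorUnitary.2, ?_⟩
    have h2 := hM.spectral_theorem
    have h3 : (RCLike.ofReal ∘ hM.eigenvalues : Fin N → ℝ) = hM.eigenvalues := by
      funext i; simp
    rw [h3] at h2
    exact h2
  -- complex matrices
  set Uc : Matrix (Fin N) (Fin N) ℂ := U.map Complex.ofReal with hUc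
  set Vc : Matrix (Fin N) (Fin N) ℂ := (star U).map Complex.ofReal with hVc
  have hUVc : Uc * Vc = 1 := by rw [hUc, hVc, ← map_mul_ofReal, hUV, map_one_ofReal]
  have hVUc : Vc * Uc = 1 := by rw [hUc, hVc, ← map_mul_ofReal, hVU, map_one_ofReal]
  have hMc : M.map Complex.ofReal = Uc * Matrix.diagonal (fun i => (μ i : ℂ)) * Vc := by
    rw [hspecM, map_mul_ofReal, map_mul_ofReal, Matrix.diagonal_map Complex.ofReal_zero]
  have hMcU : M.map Complex.ofReal * Uc = Uc * Matrix.diagonal (fun i => (μ i : ℂ)) := by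
    rw [hMc, Matrix.mul_assoc (Uc * Matrix.diagonal fun i => (μ i : ℂ)), hVUc, Matrix.mul_one]
  -- eigenvalues lie in the ball
  have hball : ∀ i, ((μ i : ℂ)) ∈ Metric.ball c R := by
    intro i
    apply hspec
    apply mem_spectrum_of_eigen _ _ (Uc.mulVec (Pi.single i 1))
    · intro h0
      have h1 : (Vc * Uc) i i = (1 : Matrix (Fin N) (Fin N) ℂ) i i := by rw [hVUc]
      rw [Matrix.one_apply_eq] at h1
      have h2 : ∀ k, Uc k i = 0 := by
        intro k
        have h3 := congrFun h0 k
        simpa [Matrix.mulVec_single] using h3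
      rw [Matrix.mul_apply] at h1
      simp [h2] at h1
    · have hps : (Pi.single i ((μ i : ℂ) * 1) : Fin N → ℂ)
          = (μ i : ℂ) • (Pi.single i 1 : Fin N → ℂ) := by
        funext j
        simp [Pi.single_apply, mul_ite]
      rw [Matrix.mulVec_mulVec, hMcU, ← Matrix.mulVec_mulVec, Matrix.diagonal_mulVec_single,
        hps, Matrix.mulVec_smul]
  -- nonvanishing facts
  have hμz : ∀ i, ∀ z ∈ Metric.sphere c R, ((μ i : ℂ)) - z ≠ 0 := by
    intro i z hz h
    have h1 : (μ i : ℂ) = z := sub_eq_zero.mp h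
    have h2 := hball i
    rw [h1] at h2
    rw [mem_ball] at h2
    rw [mem_sphere] at hz
    rw [hz] at h2
    exact lt_irrefl R h2
  have hzδc : ∀ z ∈ Metric.closedBall c R, z + (δ : ℂ) ≠ 0 := by
    intro z hz h
    apply hδΓ
    have : z = ((-δ : ℝ) : ℂ) := by push_cast; linear_combination h
    rwa [← this]
  have hμδ : ∀ i, ((μ i : ℂ)) + (δ : ℂ) ≠ 0 := fun i =>
    hzδc _ (ball_subset_closedBall (hball i))
  have hμδR : ∀ i, μ i + δ ≠ 0 := by
    intro i h
    apply hμδ i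
    exact_mod_cast congrArg (Complex.ofReal) h
  -- resolvent identity on the sphere
  have hResU : ∀ z ∈ Metric.sphere c R,
      Res z * Uc = Uc * Matrix.diagonal (fun i => ((μ i : ℂ) - z)⁻¹) := by
    intro z hz
    have hznot : z ∉ spectrum ℂ (M.map Complex.ofReal) := by
      intro hmem
      have := hspec hmem
      rw [mem_ball] at this
      rw [mem_sphere] at hz
      rw [hz] at this
      exact lt_irrefl R this
    have hunit : IsUnit (algebraMap ℂ (Matrix (Fin N) (Fin N) ℂ) z - M.map Complex.ofReal) :=
      spectrum.notMem_iff.mp hznot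
    have hunit2 : IsUnit (M.map Complex.ofReal - z • (1 : Matrix (Fin N) (Fin N) ℂ)) := by
      rw [Algebra.algebraMap_eq_smul_one] at hunit
      simpa using hunit.neg
    have hdet : IsUnit (M.map Complex.ofReal - z • (1 : Matrix (Fin N) (Fin N) ℂ)).det :=
      (Matrix.isUnit_iff_isUnit_det _).mp hunit2
    have hinv : Res z * (M.map Complex.ofReal - z • (1 : Matrix (Fin N) (Fin N) ℂ)) = 1 := by
      rw [hRes z]
      exact Matrix.nonsing_inv_mul _ hdet
    have hAU : (M.map Complex.ofReal - z • (1 : Matrix (Fin N) (Fin N) ℂ)) * Uc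
        = Uc * Matrix.diagonal (fun i => (μ i : ℂ) - z) := by
      rw [Matrix.sub_mul, hMcU, Matrix.smul_mul, Matrix.one_mul]
      have : Matrix.diagonal (fun i => (μ i : ℂ) - z)
          = Matrix.diagonal (fun i => (μ i : ℂ)) - z • (1 : Matrix (Fin N) (Fin N) ℂ) := by
        rw [Matrix.smul_one_eq_diagonal, Matrix.diagonal_sub]
      rw [this, Matrix.mul_sub, Matrix.mul_smul, Matrix.mul_one]
    have key : Uc = Res z * Uc * Matrix.diagonal (fun i => (μ i : ℂ) - z) := by
      calc Uc = (Res z * (M.map Complex.ofReal - z • (1 : Matrix (Fin N) (Fin N) ℂ))) * Uc := by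
            rw [hinv, Matrix.one_mul]
        _ = Res z * ((M.map Complex.ofReal - z • (1 : Matrix (Fin N) (Fin N) ℂ)) * Uc) := by
            rw [Matrix.mul_assoc]
        _ = Res z * (Uc * Matrix.diagonal (fun i => (μ i : ℂ) - z)) := by rw [hAU]
        _ = Res z * Uc * Matrix.diagonal (fun i => (μ i : ℂ) - z) := by rw [Matrix.mul_assoc]
    have hdd : Matrix.diagonal (fun i => (μ i : ℂ) - z)
        * Matrix.diagonal (fun i => ((μ i : ℂ) - z)⁻¹) = 1 := by
      rw [Matrix.diagonal_mul_diagonal]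
      have : (fun i => ((μ i : ℂ) - z) * ((μ i : ℂ) - z)⁻¹) = fun _ => (1 : ℂ) := by
        funext i
        exact mul_inv_cancel₀ (hμz i z hz)
      rw [this, Matrix.diagonal_one]
    calc Res z * Uc = Res z * Uc * 1 := by rw [Matrix.mul_one]
      _ = Res z * Uc * (Matrix.diagonal (fun i => (μ i : ℂ) - z)
            * Matrix.diagonal (fun i => ((μ i : ℂ) - z)⁻¹)) := by rw [hdd]
      _ = (Res z * Uc * Matrix.diagonal (fun i => (μ i : ℂ) - z))
            * Matrix.diagonal (fun i => ((μ i : ℂ) - z)⁻¹) := by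
          rw [Matrix.mul_assoc (Res z * Uc)]
      _ = Uc * Matrix.diagonal (fun i => ((μ i : ℂ) - z)⁻¹) := by rw [← key]
  -- real coordinates
  set p : Fin N → ℝ := Θ *ᵥ β with hp
  set q : Fin N → ℝ := p ᵥ* U with hq
  set w : Fin N → ℝ := star U *ᵥ (Zᵀ *ᵥ Y) with hw
  set α0 : Fin N → ℝ := star U *ᵥ a₀ with hα0
  -- g in coordinates
  have hgq : ∀ s : ℝ, g s = (∑ i, q i * (star U *ᵥ a s) i) / ((d : ℝ) * Real.sqrt N) := by
    intro s
    rw [hg s]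
    congr 1
    calc β ⬝ᵥ Θᵀ *ᵥ a s = (β ᵥ* Θᵀ) ⬝ᵥ a s := dotProduct_mulVec β Θᵀ (a s)
      _ = p ⬝ᵥ a s := by rw [Matrix.vecMul_transpose]
      _ = p ⬝ᵥ (U *ᵥ (star U *ᵥ a s)) := by
          rw [Matrix.mulVec_mulVec, hUV, Matrix.one_mulVec]
      _ = (p ᵥ* U) ⬝ᵥ (star U *ᵥ a s) := dotProduct_mulVec p U _
      _ = ∑ i, q i * (star U *ᵥ a s) i := by rw [← hq]; rfl
  -- key algebra
  have hkey : star U * (M + δ • 1) = (Matrix.diagonal μ + δ • 1) * star U := by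
    rw [Matrix.mul_add, Matrix.add_mul]
    congr 1
    · rw [hspecM, ← Matrix.mul_assoc, ← Matrix.mul_assoc, hVU, Matrix.one_mul]
    · rw [Matrix.mul_smul, Matrix.smul_mul, Matrix.mul_one, Matrix.one_mul]
  -- coordinate ODE
  have hODEc : ∀ i, ∀ s : ℝ, HasDerivAt (fun u => (star U *ᵥ a u) i)
      (-(μ i + δ) * (star U *ᵥ a s) i + (Real.sqrt N)⁻¹ * w i) s := by
    intro i s
    have h2 : ∀ j, HasDerivAt (fun u => a u j)
        ((-((M + δ • 1) *ᵥ a s) + (Real.sqrt N)⁻¹ • Zᵀ *ᵥ Y : Fin N → ℝ) j) s :=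
      fun j => hasDerivAt_pi.mp (hODE s) j
    have h3 : HasDerivAt (fun u => ∑ j, star U i j * a u j)
        (∑ j, star U i j * ((-((M + δ • 1) *ᵥ a s) + (Real.sqrt N)⁻¹ • Zᵀ *ᵥ Y : Fin N → ℝ) j)) s :=
      HasDerivAt.fun_sum (fun j _ => (h2 j).const_mul _)
    have h4 : (fun u => (star U *ᵥ a u) i) = fun u => ∑ j, star U i j * a u j := by
      funext u
      simp [Matrix.mulVec, dotProduct]
    rw [h4]
    convert h3 using 1
    have h5 : (∑ j, star U i j * ((-((M + δ • 1) *ᵥ a s) + (Real.sqrt N)⁻¹ • Zᵀ *ᵥ Y : Fin N → ℝ) j))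
        = (star U *ᵥ (-((M + δ • 1) *ᵥ a s) + (Real.sqrt N)⁻¹ • Zᵀ *ᵥ Y : Fin N → ℝ)) i := by
      simp [Matrix.mulVec, dotProduct]
    have h6 : star U *ᵥ ((M + δ • 1) *ᵥ a s) = (Matrix.diagonal μ + δ • 1) *ᵥ (star U *ᵥ a s) := by
      rw [Matrix.mulVec_mulVec, hkey, ← Matrix.mulVec_mulVec]
    rw [h5, Matrix.mulVec_add, Matrix.mulVec_neg, h6, Matrix.mulVec_smul]
    simp only [Pi.add_apply, Pi.neg_apply, Pi.smul_apply, smul_eq_mul]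
    rw [Matrix.add_mulVec, Matrix.smul_mulVec, Matrix.one_mulVec]
    simp only [Pi.add_apply, Matrix.mulVec_diagonal, Pi.smul_apply, smul_eq_mul]
    rw [← hw]
    ring
  -- solve the ODE per coordinate
  have hαsol : ∀ i, (star U *ᵥ a t) i
      = Real.exp (-(μ i + δ) * t) * α0 i
        + (1 - Real.exp (-(μ i + δ) * t)) / (μ i + δ) * ((Real.sqrt N)⁻¹ * w i) := by
    intro i
    have := ode_scalar (μ i + δ) ((Real.sqrt N)⁻¹ * w i) (hμδR i)
      (fun u => (star U *ᵥ a u) i) (fun s => hODEc i s) t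
    rw [this, ha0, ← hα0]
  -- cast identities
  have hcastα0 : (fun i => ((α0 i : ℝ) : ℂ)) = Vc *ᵥ (fun i => (a₀ i : ℂ)) := by
    rw [hVc, mulVec_map_ofReal, hα0]
  have ha₀c : (fun i => ((a₀ i : ℝ) : ℂ)) = Uc *ᵥ (fun i => (α0 i : ℂ)) := by
    rw [hcastα0, Matrix.mulVec_mulVec, hUVc, Matrix.one_mulVec]
  have hZY : (Zᵀ.map Complex.ofReal) *ᵥ (fun i => (Y i : ℂ)) = Uc *ᵥ (fun i => (w i : ℂ)) := by
    have h1 : (fun i => ((w i : ℝ) : ℂ)) = Vc *ᵥ (fun i => ((Zᵀ *ᵥ Y) i : ℂ)) := by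
      rw [hVc, mulVec_map_ofReal, hw]
    rw [mulVec_map_ofReal, h1, Matrix.mulVec_mulVec, hUVc, Matrix.one_mulVec]
  have hβΘ : ∀ (v : Fin N → ℂ),
      (fun i => ((β i : ℝ) : ℂ)) ⬝ᵥ (Θᵀ.map Complex.ofReal) *ᵥ v = (fun i => (p i : ℂ)) ⬝ᵥ v := by
    intro v
    rw [dotProduct_mulVec]
    congr 1
    rw [show Θᵀ.map Complex.ofReal = (Θ.map Complex.ofReal)ᵀ from Matrix.transpose_map,
      Matrix.vecMul_transpose, mulVec_map_ofReal, hp]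
  have hqc : Matrix.vecMul (fun i => ((p i : ℝ) : ℂ)) Uc = fun i => ((q i : ℝ) : ℂ) := by
    rw [hUc, vecMul_map_ofReal, hq]
  -- G₀ and K on the sphere
  have hG₀s : ∀ z ∈ Metric.sphere c R, G₀ z
      = ∑ i, (q i : ℂ) * (α0 i : ℂ) * (((μ i : ℂ)) - z)⁻¹ / ((d : ℂ) * (Real.sqrt N : ℂ)) := by
    intro z hz
    rw [hG₀ z, ← Matrix.mulVec_mulVec, hβΘ, ha₀c, Matrix.mulVec_mulVec, hResU z hz,
      ← Matrix.mulVec_mulVec, dotProduct_mulVec, hqc]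
    simp only [dotProduct, Matrix.mulVec_diagonal]
    rw [Finset.sum_div]
    apply Finset.sum_congr rfl
    intro i _
    ring
  have hKs : ∀ z ∈ Metric.sphere c R, K z
      = ∑ i, (q i : ℂ) * (w i : ℂ) * (((μ i : ℂ)) - z)⁻¹ / ((d : ℂ) * (N : ℂ)) := by
    intro z hz
    rw [hK z, ← Matrix.mulVec_mulVec, ← Matrix.mulVec_mulVec, hZY, hβΘ, Matrix.mulVec_mulVec,
      hResU z hz, ← Matrix.mulVec_mulVec, dotProduct_mulVec, hqc]
    simp only [dotProduct, Matrix.mulVec_diagonal]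
    rw [Finset.sum_div]
    apply Finset.sum_congr rfl
    intro i _
    ring
  -- the holomorphic pieces
  set H : Fin N → ℂ → ℂ := fun i z =>
    -(Complex.exp (-(t : ℂ) * (z + (δ : ℂ))) * ((q i : ℂ) * (α0 i : ℂ) / ((d : ℂ) * (Real.sqrt N : ℂ)))
      + (1 - Complex.exp (-(t : ℂ) * (z + (δ : ℂ)))) / (z + (δ : ℂ))
        * ((q i : ℂ) * (w i : ℂ) / ((d : ℂ) * (N : ℂ)))) with hH
  have hexpdiff : Differentiable ℂ (fun z : ℂ => Complex.exp (-(t : ℂ) * (z + (δ : ℂ)))) :=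
    ((differentiable_id.add_const ((δ : ℂ))).const_mul (-(t : ℂ))).cexp
  have hHdiff : ∀ i, DifferentiableOn ℂ (H i) (Metric.closedBall c R) := by
    intro i
    rw [hH]
    apply DifferentiableOn.neg
    apply DifferentiableOn.add
    · exact hexpdiff.differentiableOn.mul_const _
    · exact (((differentiableOn_const _).sub hexpdiff.differentiableOn).div
        ((differentiable_id.add_const ((δ : ℂ))).differentiableOn)
        (fun z hz => hzδc z hz)).mul_const _
  have hHcont : ∀ i, ContinuousOn (H i) (Metric.sphere c R) :=
    fun i => ((hHdiff i).continuousOn).mono sphere_subset_closedBall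
  have hCauchy : ∀ i, (∮ z in C(c, R), (z - ((μ i : ℂ)))⁻¹ • H i z)
      = (2 * (Real.pi : ℂ) * Complex.I) • H i ((μ i : ℂ)) :=
    fun i => (hHdiff i).circleIntegral_sub_inv_smul (hball i)
  have hinteg : ∀ i, CircleIntegrable (fun z => (z - ((μ i : ℂ)))⁻¹ • H i z) c R := by
    intro i
    apply ContinuousOn.circleIntegrable hR.le
    apply ContinuousOn.fun_smul
    · apply ContinuousOn.inv₀
      · exact (continuous_id.sub continuous_const).continuousOn
      · intro z hz h0
        apply hμz i z hz
        rw [sub_eq_zero] at h0 ⊢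
        exact h0.symm
    · exact hHcont i
  -- rewrite the integrand on the sphere
  have hEq : Set.EqOn
      (fun z => Complex.exp (-(t : ℂ) * (z + (δ : ℂ))) * G₀ z
        + ((1 - Complex.exp (-(t : ℂ) * (z + (δ : ℂ)))) / (z + (δ : ℂ))) * K z)
      (fun z => ∑ i, (z - ((μ i : ℂ)))⁻¹ • H i z) (Metric.sphere c R) := by
    intro z hz
    simp only
    rw [hG₀s z hz, hKs z hz, hH, Finset.mul_sum, Finset.mul_sum, ← Finset.sum_add_distrib]
    apply Finset.sum_congr rfl
    intro i _
    have h2 : z - (μ i : ℂ) = -((μ i : ℂ) - z) := by ring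
    rw [smul_eq_mul, h2, inv_neg]
    ring
  have hIntEq : (∮ z in C(c, R),
      (Complex.exp (-(t : ℂ) * (z + (δ : ℂ))) * G₀ z
        + ((1 - Complex.exp (-(t : ℂ) * (z + (δ : ℂ)))) / (z + (δ : ℂ))) * K z))
      = ∑ i, (2 * (Real.pi : ℂ) * Complex.I) • H i ((μ i : ℂ)) := by
    rw [circleIntegral.integral_congr hR.le hEq,
      circleIntegral_finset_sum Finset.univ _ c R (fun i _ => hinteg i)]
    exact Finset.sum_congr rfl (fun i _ => hCauchy i)
  rw [hIntEq, Finset.mul_sum]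
  -- evaluate the left-hand side
  have hπ : (2 * (Real.pi : ℂ) * Complex.I) ≠ 0 := by
    simp [Real.pi_ne_zero, Complex.I_ne_zero, Complex.ofReal_ne_zero]
  have hd' : ((d : ℕ) : ℂ) ≠ 0 := Nat.cast_ne_zero.mpr hd.ne'
  have hs' : ((Real.sqrt N : ℝ) : ℂ) ≠ 0 := by
    rw [Complex.ofReal_ne_zero]
    exact (Real.sqrt_pos.mpr (by exact_mod_cast hN)).ne'
  have hsq : ((N : ℕ) : ℂ) = ((Real.sqrt N : ℝ) : ℂ) * ((Real.sqrt N : ℝ) : ℂ) := by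
    rw [← Complex.ofReal_mul, Real.mul_self_sqrt (Nat.cast_nonneg N)]
    push_cast
    rfl
  rw [hgq t, Complex.ofReal_div,
    show ((∑ i, q i * (star U *ᵥ a t) i : ℝ) : ℂ)
      = ∑ i, ((q i : ℂ) * (((star U *ᵥ a t) i : ℝ) : ℂ)) from by push_cast; rfl,
    Finset.sum_div]
  apply Finset.sum_congr rfl
  intro i _
  rw [smul_eq_mul, show -(1 / (2 * (Real.pi : ℂ) * Complex.I))
      * ((2 * (Real.pi : ℂ) * Complex.I) * (H i ((μ i : ℂ)))) = -(H i ((μ i : ℂ))) from by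
    field_simp, hH]
  simp only [neg_neg]
  have harg : -(t : ℂ) * (((μ i : ℂ)) + (δ : ℂ)) = ((-(μ i + δ) * t : ℝ) : ℂ) := by
    push_cast
    ring
  rw [hαsol i, harg, ← Complex.ofReal_exp]
  push_cast
  rw [hsq]
  ring
end

section
/- Define the training error H^train_t = (1/n)‖Y − Z a_t/√N‖² + (λ/N)‖a_t‖² with λ = δN/n, let c = n/N, and define L₀(z) = a₀ᵀR(z)a₀/N, U₀(z) = YᵀZR(z)a₀/N^{3/2}, and V(z) = YᵀZR(z)ZᵀY/N². Then for all t ≥ 0, H^train_t = ‖Y‖²/n + (1/c) 𝓡_z{ (z+δ) e^{−2t(z+δ)} L₀(z) − 2 e^{−2t(z+δ)} U₀(z) − ((1 − e^{−2t(z+δ)})/(z+δ)) V(z) }. -/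
open Matrix Metric Set

namespace Stmt12Aux

lemma map_mulVec_ofReal {m k : ℕ} (P : Matrix (Fin m) (Fin k) ℝ) (v : Fin k → ℝ) :
    (P.map Complex.ofReal) *ᵥ (fun i => (v i : ℂ)) = fun i => ((P *ᵥ v) i : ℂ) := by
  funext i
  simp [Matrix.mulVec, dotProduct, Matrix.map_apply]

lemma ode_unique {k : ℕ} (A : Matrix (Fin k) (Fin k) ℝ) (b : Fin k → ℝ)
    (f g : ℝ → Fin k → ℝ)
    (hf : ∀ t, HasDerivAt f (-(A *ᵥ (f t)) + b) t)
    (hg : ∀ t, HasDerivAt g (-(A *ᵥ (g t)) + b) t)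
    (h0 : f 0 = g 0) (t : ℝ) (ht : 0 ≤ t) : f t = g t := by
  set L := LinearMap.toContinuousLinearMap (Matrix.mulVecLin A) with hL
  set v : (Fin k → ℝ) → (Fin k → ℝ) := fun x => -(A *ᵥ x) + b with hv
  have hlip : LipschitzWith ‖L‖₊ v := by
    apply LipschitzWith.of_dist_le_mul
    intro x y
    have h1 : v x - v y = L (y - x) := by
      simp only [hv, hL]
      have : L (y - x) = A *ᵥ (y - x) := rfl
      rw [this, Matrix.mulVec_sub]
      abel
    rw [dist_eq_norm, dist_eq_norm, h1, norm_sub_rev x y]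
    exact L.le_opNorm (y - x)
  have := ODE_solution_unique (v := fun _ x => v x) (f := f) (g := g) (a := 0) (b := t)
    (fun _ => hlip)
    (fun s _ => (hf s).continuousAt.continuousWithinAt)
    (fun s _ => ((hf s).hasDerivWithinAt))
    (fun s _ => (hg s).continuousAt.continuousWithinAt)
    (fun s _ => ((hg s).hasDerivWithinAt))
    h0
  exact this ⟨ht, le_refl t⟩

end Stmt12Aux

open Stmt12Aux

set_option maxHeartbeats 2000000 in
/-- Cauchy integral representation of the training error
`H^train_t = (1/n)‖Y - Za_t/√N‖² + (λ/N)‖a_t‖²` with `λ = δN/n`, `c = n/N`: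
`H^train_t = ‖Y‖²/n + (1/c) 𝓡_z{ (z+δ)e^{-2t(z+δ)}L₀(z) - 2e^{-2t(z+δ)}U₀(z)
  - ((1-e^{-2t(z+δ)})/(z+δ))V(z) }` for all `t ≥ 0`. -/
theorem stmt12 (n N d : ℕ) (hn : 0 < n) (hN : 0 < N) (hd : 0 < d)
    (Z : Matrix (Fin n) (Fin N) ℝ) (Θ : Matrix (Fin N) (Fin d) ℝ)
    (β : Fin d → ℝ) (Y : Fin n → ℝ) (a₀ : Fin N → ℝ) (δ : ℝ) (hδ : 0 < δ)
    (a : ℝ → Fin N → ℝ) (ha0 : a 0 = a₀)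
    (hODE : ∀ t : ℝ, HasDerivAt a
      (-((((N : ℝ)⁻¹ • (Zᵀ * Z)) + δ • (1 : Matrix (Fin N) (Fin N) ℝ)).mulVec (a t))
        + (Real.sqrt N)⁻¹ • Zᵀ.mulVec Y) t)
    (lam : ℝ) (hlam : lam = δ * N / n) (cc : ℝ) (hcc : cc = (n : ℝ) / N)
    (c : ℂ) (R : ℝ) (hR : 0 < R)
    (hspec : spectrum ℂ (((N : ℝ)⁻¹ • (Zᵀ * Z)).map Complex.ofReal) ⊆ Metric.ball c R)
    (hδΓ : ((-δ : ℝ) : ℂ) ∉ Metric.closedBall c R)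
    (Res : ℂ → Matrix (Fin N) (Fin N) ℂ)
    (hRes : ∀ z : ℂ, Res z = (((N : ℝ)⁻¹ • (Zᵀ * Z)).map Complex.ofReal
      - z • (1 : Matrix (Fin N) (Fin N) ℂ))⁻¹)
    (Htrain : ℝ → ℝ)
    (hHtrain : ∀ t : ℝ, Htrain t =
      (1 / (n : ℝ)) * ((Y - (Real.sqrt N)⁻¹ • Z.mulVec (a t)) ⬝ᵥ
        (Y - (Real.sqrt N)⁻¹ • Z.mulVec (a t)))
        + (lam / N) * (a t ⬝ᵥ a t))
    (L₀ : ℂ → ℂ)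
    (hL₀ : ∀ z : ℂ, L₀ z = ((fun i => (a₀ i : ℂ)) ⬝ᵥ
      (Res z).mulVec (fun i => (a₀ i : ℂ))) / (N : ℂ))
    (U₀ : ℂ → ℂ)
    (hU₀ : ∀ z : ℂ, U₀ z = ((fun i => (Y i : ℂ)) ⬝ᵥ
      ((Z.map Complex.ofReal) * Res z).mulVec (fun i => (a₀ i : ℂ)))
        / ((N : ℂ) * (Real.sqrt N : ℂ)))
    (V : ℂ → ℂ)
    (hV : ∀ z : ℂ, V z = ((fun i => (Y i : ℂ)) ⬝ᵥ
      ((Z.map Complex.ofReal) * Res z * (Zᵀ.map Complex.ofReal)).mulVec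
        (fun i => (Y i : ℂ))) / ((N : ℂ) ^ 2)) :
    ∀ t : ℝ, 0 ≤ t →
      ((Htrain t : ℝ) : ℂ) =
        (((Y ⬝ᵥ Y) / n : ℝ) : ℂ) + (1 / (cc : ℂ)) *
          (-(1 / (2 * Real.pi * Complex.I)) *
            (∮ z in C(c, R),
              ((z + (δ : ℂ)) * Complex.exp (-(2 * t : ℂ) * (z + (δ : ℂ))) * L₀ z
                - 2 * Complex.exp (-(2 * t : ℂ) * (z + (δ : ℂ))) * U₀ z
                - ((1 - Complex.exp (-(2 * t : ℂ) * (z + (δ : ℂ)))) / (z + (δ : ℂ))) * V z))) := by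
  intro t ht
  -- basic numerics
  have hnR : (0:ℝ) < n := by exact_mod_cast hn
  have hNR : (0:ℝ) < N := by exact_mod_cast hN
  have hsN : (0:ℝ) < Real.sqrt N := Real.sqrt_pos.mpr hNR
  -- the symmetric matrix and its spectral decomposition
  set M : Matrix (Fin N) (Fin N) ℝ := (N:ℝ)⁻¹ • (Zᵀ * Z) with hMdef
  have hZH : Zᴴ = Zᵀ := by ext i j; simp
  have hPSD : M.PosSemidef := by
    have h := Matrix.posSemidef_conjTranspose_mul_self Z
    rw [hZH] at h
    constructor
    · show Mᴴ = M
      rw [hMdef, Matrix.conjTranspose_smul, star_trivial, h.1.eq]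
    · intro x
      rw [hMdef]
      have h2 := h.2 x
      simp only [Finsupp.sum, Matrix.smul_apply, smul_eq_mul] at h2 ⊢
      calc (0:ℝ) ≤ (N:ℝ)⁻¹ * ∑ i ∈ x.support, ∑ j ∈ x.support, star (x i) * (Zᵀ * Z) i j * x j :=
            mul_nonneg (by positivity) h2
        _ = _ := by
          rw [Finset.mul_sum]
          exact Finset.sum_congr rfl fun i _ => by
            rw [Finset.mul_sum]; exact Finset.sum_congr rfl fun j _ => by ring
  have hM : M.IsHermitian := hPSD.1
  set U : Matrix (Fin N) (Fin N) ℝ := (hM.eigenvectorUnitary : Matrix (Fin N) (Fin N) ℝ)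
    with hUdef
  set lamv : Fin N → ℝ := hM.eigenvalues with hlamv
  have hlam0 : ∀ i, 0 ≤ lamv i := hPSD.eigenvalues_nonneg
  set μ : Fin N → ℝ := fun i => lamv i + δ with hμdef
  have hμ : ∀ i, 0 < μ i := fun i => add_pos_of_nonneg_of_pos (hlam0 i) hδ
  have hstar : star U = Uᵀ := by ext i j; simp [Matrix.star_apply]
  have hUU : U * Uᵀ = 1 := by
    rw [← hstar]; exact (Matrix.mem_unitaryGroup_iff).mp hM.eigenvectorUnitary.2
  have hUtU : Uᵀ * U = 1 := by
    rw [← hstar]; exact (Matrix.mem_unitaryGroup_iff').mp hM.eigenvectorUnitary.2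
  have hofid : (RCLike.ofReal ∘ lamv : Fin N → ℝ) = lamv := by funext i; simp
  have hspecthm : M = U * Matrix.diagonal lamv * Uᵀ := by
    have h2 := hM.spectral_theorem
    rw [Unitary.conjStarAlgAut_apply, hstar, hofid] at h2
    exact h2
  -- A and b
  set A : Matrix (Fin N) (Fin N) ℝ := M + δ • 1 with hAdef
  set b : Fin N → ℝ := (Real.sqrt N)⁻¹ • Zᵀ.mulVec Y with hbdef
  have hAspec : A = U * Matrix.diagonal μ * Uᵀ := by
    have hd : Matrix.diagonal μ = Matrix.diagonal lamv + (δ • 1 : Matrix (Fin N) (Fin N) ℝ) := by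
      ext i j
      rcases eq_or_ne i j with h | h
      · subst h; simp [hμdef]
      · simp [Matrix.diagonal_apply_ne _ h, Matrix.one_apply_ne h]
    rw [hd, Matrix.mul_add, Matrix.add_mul, ← hspecthm, Matrix.mul_smul, Matrix.mul_one,
      Matrix.smul_mul, hUU, hAdef]
  -- coordinates
  set α : Fin N → ℝ := Uᵀ *ᵥ a₀ with hαdef
  set γ : Fin N → ℝ := Uᵀ *ᵥ b with hγdef
  set s : ℝ → Fin N → ℝ := fun r i =>
    Real.exp (-(r * μ i)) * α i + (1 - Real.exp (-(r * μ i))) * (γ i / μ i) with hsdef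
  set g : ℝ → Fin N → ℝ := fun r => U *ᵥ (s r) with hgdef
  -- the candidate solves the ODE
  have hUb : U *ᵥ γ = b := by
    rw [hγdef, Matrix.mulVec_mulVec, hUU, Matrix.one_mulVec]
  have hg' : ∀ r, HasDerivAt g (-(A *ᵥ (g r)) + b) r := by
    intro r
    have key : ∀ i, HasDerivAt (fun r => s r i) (-(μ i * s r i) + γ i) r := by
      intro i
      have h1 : HasDerivAt (fun r : ℝ => -(r * μ i)) (-(μ i)) r := by
        simpa using ((hasDerivAt_id r).mul_const (μ i)).fun_neg
      have h2 : HasDerivAt (fun r : ℝ => Real.exp (-(r * μ i)))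
          (Real.exp (-(r * μ i)) * (-(μ i))) r := h1.exp
      have h3 : HasDerivAt (fun r => s r i)
          (Real.exp (-(r * μ i)) * (-(μ i)) * α i
            + (0 - Real.exp (-(r * μ i)) * (-(μ i))) * (γ i / μ i)) r := by
        exact (h2.mul_const (α i)).add (((hasDerivAt_const r (1:ℝ)).sub h2).mul_const (γ i / μ i))
      convert h3 using 1
      have hne : μ i ≠ 0 := (hμ i).ne'
      simp only [hsdef]
      field_simp
      ring
    have hder : HasDerivAt g (U *ᵥ (fun i => -(μ i * s r i) + γ i)) r := by
      rw [hasDerivAt_pi]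
      intro i
      have h4 : HasDerivAt (fun x => ∑ j, U i j * s x j)
          (∑ j, U i j * (-(μ j * s r j) + γ j)) r :=
        HasDerivAt.fun_sum (fun j _ => (key j).const_mul (U i j))
      simpa [hgdef, Matrix.mulVec, dotProduct] using h4
    convert hder using 1
    have h5 : (fun i => -(μ i * s r i) + γ i)
        = -((Matrix.diagonal μ) *ᵥ (s r)) + γ := by
      funext i
      simp [Matrix.mulVec_diagonal]
    rw [h5, Matrix.mulVec_add, Matrix.mulVec_neg, hUb]
    congr 2
    rw [hAspec, hgdef, Matrix.mulVec_mulVec]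
    rw [Matrix.mul_assoc (U * Matrix.diagonal μ) Uᵀ U, hUtU, Matrix.mul_one]
    exact (Matrix.mulVec_mulVec (s r) U (Matrix.diagonal μ)).symm
  have hg0 : g 0 = a₀ := by
    have h1 : s 0 = α := by funext i; simp [hsdef]
    rw [hgdef]
    simp only [h1]
    rw [hαdef, Matrix.mulVec_mulVec, hUU, Matrix.one_mulVec]
  have hat : a t = g t := ode_unique A b a g (by exact hODE) hg' (ha0.trans hg0.symm) t ht
  -- LHS closed form
  have hLHS : Htrain t = Y ⬝ᵥ Y / n
      + (1/n) * ∑ i, (μ i * (s t i)^2 - 2 * γ i * s t i) := by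
    have hkk : (Real.sqrt (N:ℝ))⁻¹ * (Real.sqrt (N:ℝ))⁻¹ = (N:ℝ)⁻¹ := by
      rw [← mul_inv, Real.mul_self_sqrt hNR.le]
    set v : Fin N → ℝ := U *ᵥ s t with hv
    have hatv : a t = v := by rw [hat, hgdef]
    have hexp : (Y - (Real.sqrt (N:ℝ))⁻¹ • Z *ᵥ v) ⬝ᵥ (Y - (Real.sqrt (N:ℝ))⁻¹ • Z *ᵥ v)
        = Y ⬝ᵥ Y - 2 * (b ⬝ᵥ v) + (N:ℝ)⁻¹ * ((Zᵀ * Z) *ᵥ v ⬝ᵥ v) := by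
      have h1 : Y ⬝ᵥ ((Real.sqrt (N:ℝ))⁻¹ • Z *ᵥ v) = b ⬝ᵥ v := by
        rw [dotProduct_smul, hbdef, smul_dotProduct]
        congr 1
        rw [Matrix.dotProduct_mulVec, ← Matrix.mulVec_transpose]
      have h2 : ((Real.sqrt (N:ℝ))⁻¹ • Z *ᵥ v) ⬝ᵥ ((Real.sqrt (N:ℝ))⁻¹ • Z *ᵥ v)
          = (N:ℝ)⁻¹ * ((Zᵀ * Z) *ᵥ v ⬝ᵥ v) := by
        rw [smul_dotProduct, dotProduct_smul, smul_eq_mul, smul_eq_mul,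
          ← mul_assoc, hkk]
        congr 1
        rw [Matrix.dotProduct_mulVec, ← Matrix.mulVec_transpose, Matrix.mulVec_mulVec]
      rw [sub_dotProduct, dotProduct_sub, dotProduct_sub,
        dotProduct_comm ((Real.sqrt (N:ℝ))⁻¹ • Z *ᵥ v) Y, h1, h2]
      ring
    have hAv : v ⬝ᵥ (A *ᵥ v) = ∑ i, μ i * (s t i)^2 := by
      have h1 : A *ᵥ v = U *ᵥ (Matrix.diagonal μ *ᵥ s t) := by
        rw [hAspec, hv, Matrix.mulVec_mulVec, Matrix.mul_assoc (U * Matrix.diagonal μ) Uᵀ U,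
          hUtU, Matrix.mul_one]
        exact (Matrix.mulVec_mulVec (s t) U (Matrix.diagonal μ)).symm
      rw [h1, hv, Matrix.dotProduct_mulVec, ← Matrix.mulVec_transpose,
        Matrix.mulVec_mulVec, hUtU, Matrix.one_mulVec]
      simp only [dotProduct, Matrix.mulVec_diagonal]
      exact Finset.sum_congr rfl fun i _ => by ring
    have hbv : b ⬝ᵥ v = ∑ i, γ i * s t i := by
      rw [hv, Matrix.dotProduct_mulVec, ← Matrix.mulVec_transpose]
      simp only [dotProduct]
      rfl
    have hMv : v ⬝ᵥ (A *ᵥ v) = (N:ℝ)⁻¹ * ((Zᵀ * Z) *ᵥ v ⬝ᵥ v) + δ * (v ⬝ᵥ v) := by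
      rw [hAdef, Matrix.add_mulVec, dotProduct_add, hMdef, Matrix.smul_mulVec,
        dotProduct_smul, Matrix.smul_mulVec, Matrix.one_mulVec,
        dotProduct_smul, dotProduct_comm v ((Zᵀ * Z) *ᵥ v)]
      simp [smul_eq_mul]
    have hS : (N:ℝ)⁻¹ * ((Zᵀ * Z) *ᵥ v ⬝ᵥ v)
        = (∑ i, μ i * (s t i)^2) - δ * (v ⬝ᵥ v) := by
      linear_combination hAv - hMv
    have hsum : ∑ i, (μ i * (s t i)^2 - 2 * γ i * s t i)
        = (∑ i, μ i * (s t i)^2) - 2 * ∑ i, γ i * s t i := by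
      rw [Finset.sum_sub_distrib, Finset.mul_sum]
      simp [mul_assoc]
    have hlamN : lam / N = δ / n := by rw [hlam]; field_simp
    rw [hHtrain t, hatv, hexp, hlamN, hS, hbv, hsum]
    field_simp
    ring
  -- complex side
  set lc : Fin N → ℂ := fun i => ((lamv i : ℝ) : ℂ) with hlcdef
  set Uc : Matrix (Fin N) (Fin N) ℂ := U.map Complex.ofReal with hUcdef
  set Mc : Matrix (Fin N) (Fin N) ℂ := M.map Complex.ofReal with hMcdef
  have hmapmul : ∀ (P Q : Matrix (Fin N) (Fin N) ℝ),
      (P * Q).map Complex.ofReal = P.map Complex.ofReal * Q.map Complex.ofReal :=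
    fun P Q => Matrix.map_mul (f := Complex.ofRealHom)
  have hmapT : ∀ (P : Matrix (Fin N) (Fin N) ℝ),
      (Pᵀ).map Complex.ofReal = (P.map Complex.ofReal)ᵀ := fun P => Matrix.transpose_map
  have hmap1 : (1 : Matrix (Fin N) (Fin N) ℝ).map Complex.ofReal = 1 := by
    simp [Matrix.map_one]
  have hUcUct : Uc * Ucᵀ = 1 := by
    rw [hUcdef, ← hmapT, ← hmapmul, hUU, hmap1]
  have hUctUc : Ucᵀ * Uc = 1 := by
    rw [hUcdef, ← hmapT, ← hmapmul, hUtU, hmap1]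
  have hMcspec : Mc = Uc * Matrix.diagonal lc * Ucᵀ := by
    rw [hMcdef, hspecthm, hmapmul, hmapmul, hmapT]
    congr 1
    congr 1
    ext i j
    rcases eq_or_ne i j with h | h
    · subst h; simp [Matrix.map_apply, hlcdef]
    · simp [Matrix.map_apply, Matrix.diagonal_apply_ne _ h]
  have hfact : ∀ z : ℂ, Mc - z • 1 = Uc * Matrix.diagonal (fun i => lc i - z) * Ucᵀ := by
    intro z
    have h1 : (z • 1 : Matrix (Fin N) (Fin N) ℂ) = Uc * Matrix.diagonal (fun _ => z) * Ucᵀ := by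
      have hd : (Matrix.diagonal (fun _ => z) : Matrix (Fin N) (Fin N) ℂ) = z • 1 := by
        ext i j
        rcases eq_or_ne i j with h | h
        · subst h; simp
        · simp [Matrix.diagonal_apply_ne _ h, Matrix.one_apply_ne h]
      rw [hd, Matrix.mul_smul, Matrix.mul_one, Matrix.smul_mul, hUcUct]
    rw [hMcspec, h1, ← Matrix.sub_mul, ← Matrix.mul_sub, ← Matrix.diagonal_sub]
  have hball : ∀ i, lc i ∈ Metric.ball c R := by
    intro i
    apply hspec
    rw [spectrum.mem_iff]
    rw [show algebraMap ℂ (Matrix (Fin N) (Fin N) ℂ) (lc i) = lc i • 1 by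
      simp [Algebra.algebraMap_eq_smul_one]]
    rw [Matrix.isUnit_iff_isUnit_det]
    have hdet : (lc i • 1 - Mc).det = 0 := by
      rw [← neg_sub, Matrix.det_neg, hfact (lc i), Matrix.det_mul, Matrix.det_mul,
        Matrix.det_diagonal, Finset.prod_eq_zero (Finset.mem_univ i) (by simp)]
      ring
    rw [hdet]
    simp
  -- resolvent formula on the sphere
  have hzs : ∀ z ∈ Metric.sphere c R, ∀ i, lc i - z ≠ 0 := by
    intro z hz i h
    have h1 : lc i = z := sub_eq_zero.mp h
    have h2 := hball i
    rw [h1, mem_ball] at h2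
    rw [mem_sphere] at hz
    exact absurd hz (ne_of_lt h2)
  have hResS : ∀ z ∈ Metric.sphere c R,
      Res z = Uc * Matrix.diagonal (fun i => (lc i - z)⁻¹) * Ucᵀ := by
    intro z hz
    rw [hRes]
    apply Matrix.inv_eq_right_inv
    rw [show (M.map Complex.ofReal - z • 1 : Matrix (Fin N) (Fin N) ℂ) = Mc - z • 1 from rfl,
      hfact z]
    simp only [Matrix.mul_assoc]
    rw [← Matrix.mul_assoc Ucᵀ Uc, hUctUc, Matrix.one_mul,
      ← Matrix.mul_assoc (Matrix.diagonal (fun i => lc i - z))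
        (Matrix.diagonal (fun i => (lc i - z)⁻¹)),
      Matrix.diagonal_mul_diagonal]
    rw [show (fun i => (lc i - z) * (lc i - z)⁻¹) = fun _ : Fin N => (1:ℂ) from
      funext fun i => mul_inv_cancel₀ (hzs z hz i)]
    rw [Matrix.diagonal_one, Matrix.one_mul, hUcUct]
  -- sum formulas for L₀, U₀, V on the sphere
  have hmapTZ : (Zᵀ).map Complex.ofReal = (Z.map Complex.ofReal)ᵀ := Matrix.transpose_map
  have hquad : ∀ z ∈ Metric.sphere c R, ∀ (u w : Fin N → ℝ),
      (fun i => (u i : ℂ)) ⬝ᵥ (Res z) *ᵥ (fun i => (w i : ℂ))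
        = ∑ i, (lc i - z)⁻¹ * ((Uᵀ *ᵥ u) i : ℂ) * ((Uᵀ *ᵥ w) i : ℂ) := by
    intro z hz u w
    have hw : Ucᵀ *ᵥ (fun i => (w i : ℂ)) = fun i => ((Uᵀ *ᵥ w) i : ℂ) := by
      rw [hUcdef, ← Matrix.transpose_map]
      exact map_mulVec_ofReal Uᵀ w
    have hu : Ucᵀ *ᵥ (fun i => (u i : ℂ)) = fun i => ((Uᵀ *ᵥ u) i : ℂ) := by
      rw [hUcdef, ← Matrix.transpose_map]
      exact map_mulVec_ofReal Uᵀ u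
    rw [hResS z hz, ← Matrix.mulVec_mulVec, ← Matrix.mulVec_mulVec, hw,
      Matrix.dotProduct_mulVec, ← Matrix.mulVec_transpose, hu]
    simp only [dotProduct, Matrix.mulVec_diagonal]
    exact Finset.sum_congr rfl fun i _ => by ring
  have hsNC : ((Real.sqrt N : ℝ) : ℂ) ≠ 0 := by exact_mod_cast hsN.ne'
  have hNne : (N : ℂ) ≠ 0 := by exact_mod_cast hNR.ne'
  have hNN : ((Real.sqrt N : ℝ) : ℂ) * ((Real.sqrt N : ℝ) : ℂ) = (N : ℂ) := by
    rw [← Complex.ofReal_mul, Real.mul_self_sqrt hNR.le]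
    norm_cast
  have hZYb : (Z.map Complex.ofReal)ᵀ *ᵥ (fun i => (Y i : ℂ))
      = ((Real.sqrt N : ℝ) : ℂ) • (fun i => ((b i : ℝ) : ℂ)) := by
    rw [← hmapTZ, map_mulVec_ofReal Zᵀ Y]
    have hZY : Zᵀ *ᵥ Y = Real.sqrt N • b := by
      rw [hbdef, smul_smul, mul_inv_cancel₀ hsN.ne', one_smul]
    funext i
    rw [hZY]
    simp
  have hLs : ∀ z ∈ Metric.sphere c R,
      L₀ z = (∑ i, (lc i - z)⁻¹ * ((α i : ℝ) : ℂ) * ((α i : ℝ) : ℂ)) / N := by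
    intro z hz
    rw [hL₀, hquad z hz a₀ a₀, ← hαdef]
  have hUs : ∀ z ∈ Metric.sphere c R,
      U₀ z = (∑ i, (lc i - z)⁻¹ * ((γ i : ℝ) : ℂ) * ((α i : ℝ) : ℂ)) / N := by
    intro z hz
    rw [hU₀, ← Matrix.mulVec_mulVec, Matrix.dotProduct_mulVec, ← Matrix.mulVec_transpose,
      hZYb, smul_dotProduct, hquad z hz b a₀, ← hαdef, ← hγdef, smul_eq_mul]
    field_simp
  have hVs : ∀ z ∈ Metric.sphere c R,
      V z = (∑ i, (lc i - z)⁻¹ * ((γ i : ℝ) : ℂ) * ((γ i : ℝ) : ℂ)) / N := by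
    intro z hz
    rw [hV, hmapTZ, ← Matrix.mulVec_mulVec, ← Matrix.mulVec_mulVec, hZYb,
      Matrix.mulVec_smul, Matrix.mulVec_smul, dotProduct_smul,
      Matrix.dotProduct_mulVec, ← Matrix.mulVec_transpose, hZYb, smul_dotProduct,
      hquad z hz b b, ← hγdef, smul_eq_mul, smul_eq_mul, ← mul_assoc, hNN, sq,
      mul_div_mul_left _ _ hNne]
  -- per-eigenvalue holomorphic functions
  set E : ℂ → ℂ := fun z => Complex.exp (-(2 * t : ℂ) * (z + δ)) with hEdef
  set f : Fin N → ℂ → ℂ := fun i z =>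
    -(((z + δ) * E z * (((α i : ℝ) : ℂ) * ((α i : ℝ) : ℂ))
      - 2 * E z * (((γ i : ℝ) : ℂ) * ((α i : ℝ) : ℂ))
      - ((1 - E z) / (z + δ)) * (((γ i : ℝ) : ℂ) * ((γ i : ℝ) : ℂ))) / N) with hfdef
  have hG : ∀ z ∈ Metric.sphere c R,
      ((z + (δ : ℂ)) * Complex.exp (-(2 * t : ℂ) * (z + (δ : ℂ))) * L₀ z
        - 2 * Complex.exp (-(2 * t : ℂ) * (z + (δ : ℂ))) * U₀ z
        - ((1 - Complex.exp (-(2 * t : ℂ) * (z + (δ : ℂ)))) / (z + (δ : ℂ))) * V z)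
        = ∑ i, (z - lc i)⁻¹ • f i z := by
    intro z hz
    have h1 : ∀ i : Fin N, (z - lc i)⁻¹ = -(lc i - z)⁻¹ := by
      intro i
      rw [← neg_sub, inv_neg]
    rw [hLs z hz, hUs z hz, hVs z hz, eq_comm]
    rw [show Complex.exp (-(2 * t : ℂ) * (z + (δ:ℂ))) = E z from rfl]
    rw [Finset.sum_congr rfl (fun i _ => show (z - lc i)⁻¹ • f i z
      = ((z + (δ:ℂ)) * E z * ((lc i - z)⁻¹ * ((α i : ℝ) : ℂ) * ((α i : ℝ) : ℂ))
        - 2 * E z * ((lc i - z)⁻¹ * ((γ i : ℝ) : ℂ) * ((α i : ℝ) : ℂ))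
        - ((1 - E z) / (z + (δ:ℂ))) * ((lc i - z)⁻¹ * ((γ i : ℝ) : ℂ) * ((γ i : ℝ) : ℂ))) / N
      from by rw [smul_eq_mul, h1 i]; simp only [hfdef]; ring)]
    rw [← Finset.sum_div, Finset.sum_sub_distrib, Finset.sum_sub_distrib,
      ← Finset.mul_sum, ← Finset.mul_sum, ← Finset.mul_sum]
    ring
  -- holomorphy of the f i
  have hδball : ∀ z ∈ Metric.closedBall c R, z + (δ:ℂ) ≠ 0 := by
    intro z hzz h
    apply hδΓ
    have h2 : z = ((-δ : ℝ) : ℂ) := by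
      push_cast
      linear_combination h
    rwa [h2] at hzz
  have hEdiff : ∀ z : ℂ, DifferentiableAt ℂ E z := by
    intro z
    exact ((differentiableAt_id.add_const _).const_mul _).cexp
  have hfdiff : ∀ (i : Fin N) (z : ℂ), z + (δ:ℂ) ≠ 0 → DifferentiableAt ℂ (f i) z := by
    intro i z hz
    rw [hfdef]
    apply DifferentiableAt.neg
    apply DifferentiableAt.div_const
    apply DifferentiableAt.sub
    apply DifferentiableAt.sub
    · exact ((differentiableAt_id.add_const _).mul (hEdiff z)).mul_const _
    · exact ((hEdiff z).const_mul 2).mul_const _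
    · exact (((differentiableAt_const 1).sub (hEdiff z)).div
        (differentiableAt_id.add_const _) hz).mul_const _
  have hDCC : ∀ i : Fin N, DiffContOnCl ℂ (f i) (Metric.ball c R) := by
    intro i
    constructor
    · intro z hz
      exact (hfdiff i z (hδball z (Metric.ball_subset_closedBall hz))).differentiableWithinAt
    · rw [closure_ball c hR.ne']
      intro z hz
      exact (hfdiff i z (hδball z hz)).continuousAt.continuousWithinAt
  have hCauchy : ∀ i : Fin N, (∮ z in C(c,R), (z - lc i)⁻¹ • f i z)
      = (2 * Real.pi * Complex.I : ℂ) • f i (lc i) :=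
    fun i => (hDCC i).circleIntegral_sub_inv_smul (hball i)
  have hInt : ∀ i : Fin N, CircleIntegrable (fun z => (z - lc i)⁻¹ • f i z) c R := by
    intro i
    apply ContinuousOn.circleIntegrable hR.le
    intro z hz
    have h1 : z - lc i ≠ 0 := by
      intro h
      exact hzs z hz i (by rw [← neg_sub z (lc i), h, neg_zero])
    exact (((continuousAt_id.sub continuousAt_const).inv₀ h1).mul
      (hfdiff i z (hδball z (Metric.sphere_subset_closedBall hz))).continuousAt).continuousWithinAt
  have hswap : (∮ z in C(c,R), ∑ i, (z - lc i)⁻¹ • f i z)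
      = ∑ i, ∮ z in C(c,R), (z - lc i)⁻¹ • f i z := by
    simp only [circleIntegral]
    rw [← intervalIntegral.integral_finset_sum (fun i _ => (hInt i).out)]
    congr 1
    funext θ
    rw [Finset.smul_sum]
  -- evaluate f i at the eigenvalues
  set e2 : Fin N → ℝ := fun i => Real.exp (-(2 * t * μ i)) with he2
  set D : Fin N → ℝ := fun i =>
    μ i * e2 i * (α i * α i) - 2 * e2 i * (γ i * α i)
      - (1 - e2 i) * (γ i * γ i) / μ i with hD
  have hflc : ∀ i, f i (lc i) = -(((D i : ℝ) : ℂ) / N) := by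
    intro i
    have hlcμ : lc i + (δ:ℂ) = ((μ i : ℝ) : ℂ) := by
      simp only [hlcdef, hμdef]
      push_cast
      ring
    have hElc : E (lc i) = ((e2 i : ℝ) : ℂ) := by
      simp only [hEdef, he2]
      rw [show (-(2 * t : ℂ) * (lc i + δ)) = ((-(2 * t * μ i) : ℝ) : ℂ) by
        rw [hlcμ]; push_cast; ring]
      rw [Complex.ofReal_exp]
    simp only [hfdef, hD]
    rw [hElc, hlcμ]
    have hne : ((μ i : ℝ) : ℂ) ≠ 0 := by exact_mod_cast (hμ i).ne'
    push_cast
    field_simp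
    try ring
  have hreal : ∀ i, μ i * (s t i)^2 - 2 * γ i * s t i = D i := by
    intro i
    have h2 : e2 i = (Real.exp (-(t * μ i)))^2 := by
      simp only [he2]
      rw [show -(2 * t * μ i) = (2:ℕ) * (-(t * μ i)) by push_cast; ring, Real.exp_nat_mul]
    simp only [hsdef, hD, h2]
    have hne : μ i ≠ 0 := (hμ i).ne'
    field_simp
    ring
  have hint : (∮ z in C(c, R),
      ((z + (δ : ℂ)) * Complex.exp (-(2 * t : ℂ) * (z + (δ : ℂ))) * L₀ z
        - 2 * Complex.exp (-(2 * t : ℂ) * (z + (δ : ℂ))) * U₀ z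
        - ((1 - Complex.exp (-(2 * t : ℂ) * (z + (δ : ℂ)))) / (z + (δ : ℂ))) * V z))
      = (2 * (Real.pi:ℂ) * Complex.I) * ∑ i, f i (lc i) := by
    rw [circleIntegral.integral_congr hR.le (fun z hz => hG z hz), hswap]
    rw [Finset.sum_congr rfl (fun i _ => hCauchy i)]
    simp only [smul_eq_mul]
    rw [← Finset.mul_sum]
  rw [hint]
  have hpi : (2 * (Real.pi:ℂ) * Complex.I) ≠ 0 :=
    mul_ne_zero (mul_ne_zero two_ne_zero (by exact_mod_cast Real.pi_ne_zero)) Complex.I_ne_zero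
  have hstep : -(1 / (2 * (Real.pi:ℂ) * Complex.I))
      * ((2 * (Real.pi:ℂ) * Complex.I) * ∑ i, f i (lc i)) = -(∑ i, f i (lc i)) := by
    field_simp
  rw [hstep]
  rw [Finset.sum_congr rfl (fun i _ => hflc i)]
  have hsumc : ∑ i : Fin N, -(((D i : ℝ) : ℂ) / N) = -((((∑ i, D i : ℝ)) : ℂ) / N) := by
    rw [Finset.sum_neg_distrib, ← Finset.sum_div]
    push_cast
    ring
  rw [hsumc, hLHS, hcc]
  have hsum2 : ∑ i, (μ i * (s t i)^2 - 2 * γ i * s t i) = ∑ i, D i :=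
    Finset.sum_congr rfl fun i _ => hreal i
  rw [hsum2]
  have hnne : (n : ℂ) ≠ 0 := by exact_mod_cast hnR.ne'
  push_cast
  field_simp
end

section
/- Define H_t(x,y) = a_tᵀR(x)ΘΘᵀR(y)a_t/(dN), Q_t(x,y) = a_tᵀR(x)ΘΘᵀR(y)ZᵀY/(dN^{3/2}), W(x,y) = YᵀZR(x)ΘΘᵀR(y)ZᵀY/(dN²), P_t(y) = a_tᵀΘΘᵀR(y)a_t/(dN), and S_t(y) = a_tᵀΘΘᵀR(y)ZᵀY/(dN^{3/2}). Then for all x, y ∈ ℂ outside the spectrum of ZᵀZ/N and all t ∈ ℝ: ∂H_t(x,y)/∂t = Q_t(x,y) + Q_t(y,x) − P_t(y) − P_t(x) − (x+y+2δ) H_t(x,y), and ∂Q_t(x,y)/∂t = W(x,y) − S_t(y) − (x+δ) Q_t(x,y). -/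
open Matrix

lemma mulVec_dot' {m k : ℕ} (M : Matrix (Fin m) (Fin k) ℂ) (v : Fin k → ℂ) (w : Fin m → ℂ) :
    (M.mulVec v) ⬝ᵥ w = v ⬝ᵥ Mᵀ.mulVec w := by
  rw [Matrix.dotProduct_mulVec, Matrix.vecMul_transpose]

lemma hasDerivAt_dot_const' {N : ℕ} {u : ℝ → Fin N → ℂ} {u' : Fin N → ℂ} {t : ℝ}
    (hu : ∀ i, HasDerivAt (fun s => u s i) (u' i) t) (c : Fin N → ℂ) :
    HasDerivAt (fun s => u s ⬝ᵥ c) (u' ⬝ᵥ c) t := by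
  simp only [dotProduct]
  exact HasDerivAt.fun_sum fun i _ => (hu i).mul_const (c i)

lemma hasDerivAt_quad' {N : ℕ} {u : ℝ → Fin N → ℂ} {u' : Fin N → ℂ} {t : ℝ}
    (hu : ∀ i, HasDerivAt (fun s => u s i) (u' i) t) (M : Matrix (Fin N) (Fin N) ℂ) :
    HasDerivAt (fun s => u s ⬝ᵥ M.mulVec (u s))
      (u' ⬝ᵥ M.mulVec (u t) + u t ⬝ᵥ M.mulVec u') t := by
  have key : ∀ v w : Fin N → ℂ, v ⬝ᵥ M.mulVec w = ∑ i, ∑ j, v i * M i j * w j := by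
    intro v w
    simp [dotProduct, Matrix.mulVec, Finset.mul_sum, mul_assoc]
  have h1 : HasDerivAt (fun s => ∑ i, ∑ j, u s i * M i j * u s j)
      (∑ i, ∑ j, (u' i * M i j * u t j + u t i * M i j * u' j)) t := by
    refine HasDerivAt.fun_sum fun i _ => HasDerivAt.fun_sum fun j _ => ?_
    exact ((hu i).mul_const (M i j)).mul (hu j)
  have h2 : (fun s => u s ⬝ᵥ M.mulVec (u s)) = fun s => ∑ i, ∑ j, u s i * M i j * u s j :=
    funext fun s => key _ _
  rw [h2]
  convert h1 using 1
  rw [key, key, ← Finset.sum_add_distrib]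
  exact Finset.sum_congr rfl fun i _ => (Finset.sum_add_distrib).symm

lemma ofReal_mulVec' {m k : ℕ} (M : Matrix (Fin m) (Fin k) ℝ) (v : Fin k → ℝ) (i : Fin m) :
    (M.map Complex.ofReal).mulVec (fun j => (v j : ℂ)) i = ((M.mulVec v i : ℝ) : ℂ) := by
  simp [Matrix.mulVec, dotProduct, Matrix.map_apply]

lemma scalar1 (dd s h px py qxy qyx x y dl : ℂ) (hdd : dd ≠ 0) (hs : s ≠ 0) :
    ((-py - (x + dl) * h + s⁻¹ * qyx) + (-px - (y + dl) * h + s⁻¹ * qxy)) / (dd * (s * s)) =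
    qxy / (dd * (s * s) * s) + qyx / (dd * (s * s) * s) - py / (dd * (s * s))
      - px / (dd * (s * s)) - (x + y + 2 * dl) * (h / (dd * (s * s))) := by
  ring

lemma scalar2 (dd s w sy qxy x dl : ℂ) (hdd : dd ≠ 0) (hs : s ≠ 0) :
    (-sy - (x + dl) * qxy + s⁻¹ * w) / (dd * (s * s) * s) =
    w / (dd * (s * s) ^ 2) - sy / (dd * (s * s) * s) - (x + dl) * (qxy / (dd * (s * s) * s)) := by
  ring

set_option maxHeartbeats 1000000 in
/-- for all `x, y` outside the spectrum of `ZᵀZ/N` and all `t`,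
`∂H_t(x,y)/∂t = Q_t(x,y) + Q_t(y,x) - P_t(y) - P_t(x) - (x+y+2δ) H_t(x,y)` and
`∂Q_t(x,y)/∂t = W(x,y) - S_t(y) - (x+δ) Q_t(x,y)`. -/
theorem stmt14 (n N d : ℕ) (hn : 0 < n) (hN : 0 < N) (hd : 0 < d)
    (Z : Matrix (Fin n) (Fin N) ℝ) (Θ : Matrix (Fin N) (Fin d) ℝ)
    (β : Fin d → ℝ) (Y : Fin n → ℝ) (a₀ : Fin N → ℝ) (δ : ℝ) (hδ : 0 < δ)
    (a : ℝ → Fin N → ℝ) (ha0 : a 0 = a₀)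
    (hODE : ∀ t : ℝ, HasDerivAt a
      (-((((N : ℝ)⁻¹ • (Zᵀ * Z)) + δ • (1 : Matrix (Fin N) (Fin N) ℝ)).mulVec (a t))
        + (Real.sqrt N)⁻¹ • Zᵀ.mulVec Y) t)
    (Res : ℂ → Matrix (Fin N) (Fin N) ℂ)
    (hRes : ∀ z : ℂ, Res z = (((N : ℝ)⁻¹ • (Zᵀ * Z)).map Complex.ofReal
      - z • (1 : Matrix (Fin N) (Fin N) ℂ))⁻¹)
    (H : ℝ → ℂ → ℂ → ℂ)
    (hH : ∀ (t : ℝ) (x y : ℂ), H t x y = ((fun i => (a t i : ℂ)) ⬝ᵥ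
      (Res x * ((Θ * Θᵀ).map Complex.ofReal) * Res y).mulVec (fun i => (a t i : ℂ)))
        / ((d : ℂ) * (N : ℂ)))
    (Q : ℝ → ℂ → ℂ → ℂ)
    (hQ : ∀ (t : ℝ) (x y : ℂ), Q t x y = ((fun i => (a t i : ℂ)) ⬝ᵥ
      (Res x * ((Θ * Θᵀ).map Complex.ofReal) * Res y * (Zᵀ.map Complex.ofReal)).mulVec
        (fun i => (Y i : ℂ))) / ((d : ℂ) * (N : ℂ) * (Real.sqrt N : ℂ)))
    (W : ℂ → ℂ → ℂ)
    (hW : ∀ x y : ℂ, W x y = ((fun i => (Y i : ℂ)) ⬝ᵥ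
      ((Z.map Complex.ofReal) * Res x * ((Θ * Θᵀ).map Complex.ofReal) * Res y *
        (Zᵀ.map Complex.ofReal)).mulVec (fun i => (Y i : ℂ)))
        / ((d : ℂ) * (N : ℂ) ^ 2))
    (P : ℝ → ℂ → ℂ)
    (hP : ∀ (t : ℝ) (y : ℂ), P t y = ((fun i => (a t i : ℂ)) ⬝ᵥ
      (((Θ * Θᵀ).map Complex.ofReal) * Res y).mulVec (fun i => (a t i : ℂ)))
        / ((d : ℂ) * (N : ℂ)))
    (S : ℝ → ℂ → ℂ)
    (hS : ∀ (t : ℝ) (y : ℂ), S t y = ((fun i => (a t i : ℂ)) ⬝ᵥ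
      (((Θ * Θᵀ).map Complex.ofReal) * Res y * (Zᵀ.map Complex.ofReal)).mulVec
        (fun i => (Y i : ℂ))) / ((d : ℂ) * (N : ℂ) * (Real.sqrt N : ℂ))) :
    ∀ (x y : ℂ),
      x ∉ spectrum ℂ (((N : ℝ)⁻¹ • (Zᵀ * Z)).map Complex.ofReal) →
      y ∉ spectrum ℂ (((N : ℝ)⁻¹ • (Zᵀ * Z)).map Complex.ofReal) →
      ∀ t : ℝ,
        HasDerivAt (fun s => H s x y)
          (Q t x y + Q t y x - P t y - P t x - (x + y + 2 * (δ : ℂ)) * H t x y) t ∧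
        HasDerivAt (fun s => Q s x y)
          (W x y - S t y - (x + (δ : ℂ)) * Q t x y) t := by
  intro x y hx hy t
  -- abbreviations
  set Ac : Matrix (Fin N) (Fin N) ℂ := ((N : ℝ)⁻¹ • (Zᵀ * Z)).map Complex.ofReal with hAc
  set G : Matrix (Fin N) (Fin N) ℂ := (Θ * Θᵀ).map Complex.ofReal with hG
  set Zc : Matrix (Fin n) (Fin N) ℂ := Z.map Complex.ofReal with hZc
  set Zt : Matrix (Fin N) (Fin n) ℂ := Zᵀ.map Complex.ofReal with hZt
  set Mc : Matrix (Fin N) (Fin N) ℂ := Ac + (δ : ℂ) • 1 with hMc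
  set s0 : ℂ := ((Real.sqrt N : ℝ) : ℂ) with hs0
  set Yc : Fin n → ℂ := fun i => ((Y i : ℂ)) with hYc
  set ut : Fin N → ℂ := fun i => ((a t i : ℂ)) with hut
  set Rx := Res x with hRx
  set Ry := Res y with hRy
  -- basic symmetry facts
  have hZtc : Zt = Zcᵀ := Matrix.transpose_map
  have hGT : Gᵀ = G := by
    rw [hG, ← Matrix.transpose_map, Matrix.transpose_mul, Matrix.transpose_transpose]
  have hAcT : Acᵀ = Ac := by
    rw [hAc, ← Matrix.transpose_map, Matrix.transpose_smul, Matrix.transpose_mul,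
      Matrix.transpose_transpose]
  have hMcT : Mcᵀ = Mc := by
    rw [hMc, Matrix.transpose_add, hAcT, Matrix.transpose_smul, Matrix.transpose_one]
  -- units and resolvent identities
  have hunit : ∀ z : ℂ, z ∉ spectrum ℂ Ac → IsUnit (Ac - z • (1 : Matrix (Fin N) (Fin N) ℂ)) := by
    intro z hz
    have h := spectrum.notMem_iff.mp hz
    rw [Algebra.algebraMap_eq_smul_one] at h
    simpa [neg_sub] using h.neg
  have hdx := (Matrix.isUnit_iff_isUnit_det _).mp (hunit x hx)
  have hdy := (Matrix.isUnit_iff_isUnit_det _).mp (hunit y hy)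
  have hResx : Rx = (Ac - x • (1 : Matrix (Fin N) (Fin N) ℂ))⁻¹ := by rw [hRx, hRes]
  have hResy : Ry = (Ac - y • (1 : Matrix (Fin N) (Fin N) ℂ))⁻¹ := by rw [hRy, hRes]
  have hRx1 : (Ac - x • 1) * Rx = 1 := by rw [hResx]; exact Matrix.mul_nonsing_inv _ hdx
  have hRy2 : Ry * (Ac - y • 1) = 1 := by rw [hResy]; exact Matrix.nonsing_inv_mul _ hdy
  have hRxT : Rxᵀ = Rx := by
    rw [hResx, Matrix.transpose_nonsing_inv, Matrix.transpose_sub, hAcT, Matrix.transpose_smul,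
      Matrix.transpose_one]
  have hRyT : Ryᵀ = Ry := by
    rw [hResy, Matrix.transpose_nonsing_inv, Matrix.transpose_sub, hAcT, Matrix.transpose_smul,
      Matrix.transpose_one]
  have hsplit : ∀ z : ℂ, Mc = (Ac - z • 1) + (z + (δ : ℂ)) • 1 := by
    intro z
    rw [hMc, add_smul, ← add_assoc, sub_add_cancel]
  have hMRx : Mc * Rx = 1 + (x + (δ : ℂ)) • Rx := by
    rw [hsplit x, add_mul, hRx1, Matrix.smul_mul, one_mul]
  have hRyM : Ry * Mc = 1 + (y + (δ : ℂ)) • Ry := by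
    rw [hsplit y, mul_add, hRy2, Matrix.mul_smul, mul_one]
  -- the derivative of the coefficient path, complexified
  have hMc_map : Mc = (((N : ℝ)⁻¹ • (Zᵀ * Z)) + δ • (1 : Matrix (Fin N) (Fin N) ℝ)).map
      Complex.ofReal := by
    ext i j
    by_cases hij : i = j <;>
      simp [hMc, hAc, Matrix.map_apply, Matrix.one_apply, hij]
  have hcast : ∀ i : Fin N,
      (((-((((N : ℝ)⁻¹ • (Zᵀ * Z)) + δ • (1 : Matrix (Fin N) (Fin N) ℝ)).mulVec (a t))
        + (Real.sqrt N)⁻¹ • Zᵀ.mulVec Y) i : ℝ) : ℂ)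
      = (-(Mc.mulVec ut) + s0⁻¹ • (Zt.mulVec Yc)) i := by
    intro i
    have h1 := ofReal_mulVec' (((N : ℝ)⁻¹ • (Zᵀ * Z)) + δ • 1) (a t) i
    have h2 := ofReal_mulVec' Zᵀ Y i
    simp only [Pi.add_apply, Pi.neg_apply, Pi.smul_apply, smul_eq_mul, Complex.ofReal_add,
      Complex.ofReal_neg, Complex.ofReal_mul, Complex.ofReal_inv]
    rw [hMc_map, hut, hZt, hYc, h1, h2, hs0]
  have hu : ∀ i : Fin N, HasDerivAt (fun s => ((a s i : ℂ)))
      ((-(Mc.mulVec ut) + s0⁻¹ • (Zt.mulVec Yc)) i) t := by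
    intro i
    have := ((hasDerivAt_pi.mp (hODE t)) i).ofReal_comp
    rw [← hcast i]
    exact this
  set u' : Fin N → ℂ := -(Mc.mulVec ut) + s0⁻¹ • (Zt.mulVec Yc) with hu'
  -- scalar abbreviations
  set B : Matrix (Fin N) (Fin N) ℂ := Rx * G * Ry with hB
  have hBT : Bᵀ = Ry * G * Rx := by
    rw [hB, Matrix.transpose_mul, Matrix.transpose_mul, hRxT, hRyT, hGT, Matrix.mul_assoc]
  -- numbers
  have hNe : (N : ℂ) ≠ 0 := Nat.cast_ne_zero.mpr hN.ne'
  have hde : (d : ℂ) ≠ 0 := Nat.cast_ne_zero.mpr hd.ne'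
  have hs0sq : s0 * s0 = (N : ℂ) := by
    rw [hs0, ← Complex.ofReal_mul, Real.mul_self_sqrt (Nat.cast_nonneg N)]
    norm_cast
  have hs0ne : s0 ≠ 0 := by
    intro h
    rw [h, zero_mul] at hs0sq
    exact hNe hs0sq.symm
  have hNs : (N : ℂ) = s0 * s0 := hs0sq.symm
  -- key matrix identities
  have hMcB : Mc * B = G * Ry + (x + (δ : ℂ)) • B := by
    have e : Mc * B = (Mc * Rx) * (G * Ry) := by rw [hB]; noncomm_ring
    rw [e, hMRx, add_mul, one_mul, Matrix.smul_mul]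
    congr 1
    rw [hB, Matrix.mul_assoc]
  have hBMc : B * Mc = Rx * G + (y + (δ : ℂ)) • B := by
    have e : B * Mc = (Rx * G) * (Ry * Mc) := by rw [hB]; noncomm_ring
    rw [e, hRyM, mul_add, mul_one, Matrix.mul_smul]
  -- dot-product computations
  have sym1 : ∀ (M : Matrix (Fin N) (Fin N) ℂ) (v w : Fin N → ℂ),
      (M.mulVec v) ⬝ᵥ w = v ⬝ᵥ Mᵀ.mulVec w := fun M v w => mulVec_dot' M v w
  have hterm1 : u' ⬝ᵥ B.mulVec ut =
      -(ut ⬝ᵥ (G * Ry).mulVec ut) - (x + (δ : ℂ)) * (ut ⬝ᵥ B.mulVec ut)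
        + s0⁻¹ * (ut ⬝ᵥ (Ry * G * Rx * Zt).mulVec Yc) := by
    rw [hu', add_dotProduct, neg_dotProduct, smul_dotProduct,
      smul_eq_mul]
    have e1 : (Mc.mulVec ut) ⬝ᵥ B.mulVec ut =
        ut ⬝ᵥ (G * Ry).mulVec ut + (x + (δ : ℂ)) * (ut ⬝ᵥ B.mulVec ut) := by
      rw [sym1, hMcT, Matrix.mulVec_mulVec, hMcB, Matrix.add_mulVec,
        dotProduct_add, Matrix.smul_mulVec, dotProduct_smul, smul_eq_mul]
    have e2 : (Zt.mulVec Yc) ⬝ᵥ B.mulVec ut = ut ⬝ᵥ (Ry * G * Rx * Zt).mulVec Yc := by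
      rw [mulVec_dot' Zt Yc, hZtc, Matrix.transpose_transpose, Matrix.mulVec_mulVec,
        dotProduct_comm, mulVec_dot', Matrix.transpose_mul, hBT, ← hZtc]
    rw [e1, e2]
    ring
  have hterm2 : ut ⬝ᵥ B.mulVec u' =
      -(ut ⬝ᵥ (G * Rx).mulVec ut) - (y + (δ : ℂ)) * (ut ⬝ᵥ B.mulVec ut)
        + s0⁻¹ * (ut ⬝ᵥ (Rx * G * Ry * Zt).mulVec Yc) := by
    rw [hu', Matrix.mulVec_add, Matrix.mulVec_neg, Matrix.mulVec_smul,
      dotProduct_add, dotProduct_neg, dotProduct_smul, smul_eq_mul]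
    have sym2 : ut ⬝ᵥ (Rx * G).mulVec ut = ut ⬝ᵥ (G * Rx).mulVec ut := by
      rw [dotProduct_comm, mulVec_dot', Matrix.transpose_mul, hRxT, hGT]
    have e1 : ut ⬝ᵥ B.mulVec (Mc.mulVec ut) =
        ut ⬝ᵥ (G * Rx).mulVec ut + (y + (δ : ℂ)) * (ut ⬝ᵥ B.mulVec ut) := by
      rw [Matrix.mulVec_mulVec, hBMc, Matrix.add_mulVec, dotProduct_add,
        Matrix.smul_mulVec, dotProduct_smul, smul_eq_mul, sym2]
    have e2 : ut ⬝ᵥ B.mulVec (Zt.mulVec Yc) = ut ⬝ᵥ (Rx * G * Ry * Zt).mulVec Yc := by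
      rw [Matrix.mulVec_mulVec, hB]
    rw [e1, e2]
    ring
  have hterm3 : u' ⬝ᵥ (Rx * G * Ry * Zt).mulVec Yc =
      -(ut ⬝ᵥ (G * Ry * Zt).mulVec Yc) - (x + (δ : ℂ)) * (ut ⬝ᵥ (Rx * G * Ry * Zt).mulVec Yc)
        + s0⁻¹ * (Yc ⬝ᵥ (Zc * Rx * G * Ry * Zt).mulVec Yc) := by
    rw [hu', add_dotProduct, neg_dotProduct, smul_dotProduct,
      smul_eq_mul]
    have e1 : (Mc.mulVec ut) ⬝ᵥ (Rx * G * Ry * Zt).mulVec Yc =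
        ut ⬝ᵥ (G * Ry * Zt).mulVec Yc
          + (x + (δ : ℂ)) * (ut ⬝ᵥ (Rx * G * Ry * Zt).mulVec Yc) := by
      rw [sym1, hMcT, Matrix.mulVec_mulVec]
      have e : Mc * (Rx * G * Ry * Zt) = G * Ry * Zt + (x + (δ : ℂ)) • (Rx * G * Ry * Zt) := by
        have e' : Mc * (Rx * G * Ry * Zt) = (Mc * Rx) * (G * Ry * Zt) := by
          simp only [Matrix.mul_assoc]
        rw [e', hMRx, Matrix.add_mul, Matrix.one_mul, Matrix.smul_mul]
        congr 1
        simp only [Matrix.mul_assoc]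
      rw [e, Matrix.add_mulVec, dotProduct_add, Matrix.smul_mulVec,
        dotProduct_smul, smul_eq_mul]
    have e2 : (Zt.mulVec Yc) ⬝ᵥ (Rx * G * Ry * Zt).mulVec Yc =
        Yc ⬝ᵥ (Zc * Rx * G * Ry * Zt).mulVec Yc := by
      have hmm : Zc * (Rx * G * Ry * Zcᵀ) = Zc * Rx * G * Ry * Zcᵀ := by
        simp only [Matrix.mul_assoc]
      rw [mulVec_dot' Zt Yc, hZtc, Matrix.transpose_transpose, Matrix.mulVec_mulVec, hmm]
    rw [e1, e2]
    ring
  constructor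
  · -- derivative of H
    simp only [hH, hQ, hP]
    have main := (hasDerivAt_quad' (u := fun s i => ((a s i : ℂ))) hu B).div_const
      ((d : ℂ) * (N : ℂ))
    have heq : (u' ⬝ᵥ B.mulVec ut + ut ⬝ᵥ B.mulVec u') / ((d : ℂ) * (N : ℂ)) =
        (ut ⬝ᵥ (Rx * G * Ry * Zt).mulVec Yc) / ((d : ℂ) * (N : ℂ) * s0)
          + (ut ⬝ᵥ (Ry * G * Rx * Zt).mulVec Yc) / ((d : ℂ) * (N : ℂ) * s0)
          - (ut ⬝ᵥ (G * Ry).mulVec ut) / ((d : ℂ) * (N : ℂ))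
          - (ut ⬝ᵥ (G * Rx).mulVec ut) / ((d : ℂ) * (N : ℂ))
          - (x + y + 2 * (δ : ℂ)) * ((ut ⬝ᵥ B.mulVec ut) / ((d : ℂ) * (N : ℂ))) := by
      rw [hterm1, hterm2, hNs]
      exact scalar1 _ _ _ _ _ _ _ _ _ _ hde hs0ne
    rw [← heq]
    exact main
  · -- derivative of Q
    simp only [hQ, hW, hS]
    have main := (hasDerivAt_dot_const' (u := fun s i => ((a s i : ℂ))) hu
      ((Rx * G * Ry * Zt).mulVec Yc)).div_const ((d : ℂ) * (N : ℂ) * s0)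
    have heq : (u' ⬝ᵥ (Rx * G * Ry * Zt).mulVec Yc) / ((d : ℂ) * (N : ℂ) * s0) =
        (Yc ⬝ᵥ (Zc * Rx * G * Ry * Zt).mulVec Yc) / ((d : ℂ) * (N : ℂ) ^ 2)
          - (ut ⬝ᵥ (G * Ry * Zt).mulVec Yc) / ((d : ℂ) * (N : ℂ) * s0)
          - (x + (δ : ℂ)) * ((ut ⬝ᵥ (Rx * G * Ry * Zt).mulVec Yc) / ((d : ℂ) * (N : ℂ) * s0)) := by
      rw [hterm3, hNs]
      exact scalar2 _ _ _ _ _ _ _ hde hs0ne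
    rw [← heq]
    exact main
end
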